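/- arXiv:2307.05160 — 2 statements merged into one kernel-verified Lean document; each statement's English description precedes it below -/
import Mathlib

section
/- Let a > −1 and ε ≥ 0 be real and L ≥ 2 an integer. Let φ ∈ F(ε,L), and suppose φ = Σ_{k≥0} c_k·g_k and, for each m ≥ 1, e_m = Σ_{k≥0} E_{m,k}·g_k, as finite linear combinations of the functions g_k = g_k(·; a, ε, L) (identities valid at every complex t where all terms are defined). Define Res_{A_m}(φ) := lim_{t→A_m} (t−A_m)·φ(t) and φ(∞) := lim_{t→∞} φ(t). Then for every k ≥ 1, c_k = Σ_{m≥k} Res_{A_m}(φ)·E_{m,k}, and c_0 = φ(∞) + Σ_{m≥1} Res_{A_m}(φ)·E_{m,0}; in each sum only finitely many terms are nonzero (since φ has only finitely many poles). -/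
open Finset

/-- Pochhammer symbol over `ℂ`. -/
noncomputable def pochC (x : ℂ) (n : ℕ) : ℂ := (ascPochhammer ℂ n).eval x

/-- `g_k(t; a, ε, L)`, the terminating ₄F₃-type series. -/
noncomputable def gfun (a eps : ℝ) (L k : ℕ) (t : ℂ) : ℂ :=
  ∑ n ∈ Finset.range (k+1),
    (pochC (-(k:ℂ)) n * pochC ((k:ℂ) + 2*(eps:ℂ)) n * pochC (L:ℂ) n * pochC ((L:ℂ) + (a:ℂ)) n) /
    (pochC (-t + (L:ℂ) + (eps:ℂ)) n * pochC (t + (L:ℂ) + (eps:ℂ)) n * pochC ((a:ℂ)+1) n *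
      (Nat.factorial n : ℂ))

/-- `e_0 ≡ 1` and, for `m ≥ 1`, `e_m(t) = 1/(t−A_m) − 1/(t+A_m)` with `A_m = L+ε+m−1`. -/
noncomputable def efun (eps : ℝ) (L m : ℕ) (t : ℂ) : ℂ :=
  if m = 0 then 1
  else 1/(t - ((L:ℂ) + (eps:ℂ) + (m:ℂ) - 1)) - 1/(t + ((L:ℂ) + (eps:ℂ) + (m:ℂ) - 1))

/-- `t` avoids all the points `±A_m = ±(L+ε+m−1)`, `m ≥ 1`. -/
def Adm (eps : ℝ) (L : ℕ) (t : ℂ) : Prop :=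
  ∀ m : ℕ, t^2 ≠ ((L:ℂ) + (eps:ℂ) + (m:ℂ))^2

/-- Membership in the space `F(ε,L)`: even rational functions regular at `∞` whose only
singularities are simple poles contained in `{±A_m : m ≥ 1}`; such functions are exactly
the finite linear combinations `c₀ + Σ_{m≥1} r_m (1/(t−A_m) − 1/(t+A_m))`
(partial-fraction expansion), where `r_m` is the residue at `A_m`. -/
def InF (eps : ℝ) (L : ℕ) (φ : ℂ → ℂ) : Prop :=
  ∃ r : ℕ → ℂ, (Function.support r).Finite ∧
    ∀ t : ℂ, Adm eps L t → φ t = ∑ᶠ m : ℕ, r m * efun eps L m t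

/-! Each `g_k` is a finite sum of multiples of `1 / ∏_{j=1}^{n} (A_j² − t²)`, `n ≤ k`, so it has a
nonzero residue at `A_k` and none at `A_m` for `m > k`. This triangularity makes the `g_k` linearly
independent on the admissible points, and forces `E_{m,k} = 0` for `k > m`, since `e_m` has no
residue beyond `A_m`. Writing `φ = φ(∞) + Σ_m Res_{A_m}(φ) e_m` and expanding every `e_m` then
identifies the coefficients `c_k`. Residues and limits at `∞` are compared along non-real points,
where all the expansions hold. -/

open Filter Topology Function Bornology

section FiniteSums

variable {α β R : Type*}

lemma tendsto_finsum_mul [Semiring R] [TopologicalSpace R] [IsTopologicalSemiring R]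
    {l : Filter α} {c : β → R} (hc : c.support.Finite) {f : β → α → R} {y : β → R}
    (hf : ∀ i, Tendsto (f i) l (𝓝 (y i))) :
    Tendsto (fun x => ∑ᶠ i, c i * f i x) l (𝓝 (∑ᶠ i, c i * y i)) := by
  have hsupp : ∀ g : β → R, (fun i => c i * g i).support ⊆ hc.toFinset := fun g =>
    (support_mul_subset_left _ _).trans hc.coe_toFinset.symm.subset
  simp_rw [finsum_eq_sum_of_support_subset _ (hsupp _)]
  exact tendsto_finsetSum _ fun i _ => (hf i).const_mul (c i)

lemma finsum_mul_finsum_mul_comm [CommSemiring R] {r : α → R} {E : α → β → R} {g : β → R}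
    (hr : r.support.Finite) (hE : ∀ i, (E i).support.Finite) :
    ∑ᶠ i, r i * ∑ᶠ j, E i j * g j = ∑ᶠ j, (∑ᶠ i, r i * E i j) * g j := by
  have hsupp : ∀ h : α → R, (fun i => r i * h i).support ⊆ hr.toFinset := fun h =>
    (support_mul_subset_left _ _).trans hr.coe_toFinset.symm.subset
  have hEg : ∀ i, (fun j => E i j * g j).support.Finite := fun i =>
    (hE i).subset (support_mul_subset_left _ _)
  calc ∑ᶠ i, r i * ∑ᶠ j, E i j * g j
      = ∑ i ∈ hr.toFinset, ∑ᶠ j, r i * (E i j * g j) := by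
        rw [finsum_eq_sum_of_support_subset _ (hsupp _)]
        exact Finset.sum_congr rfl fun i _ => mul_finsum' _ _ (hEg i)
    _ = ∑ᶠ j, ∑ i ∈ hr.toFinset, r i * (E i j * g j) :=
        sum_finsum_comm _ _ fun i _ => (hEg i).subset (support_mul_subset_right _ _)
    _ = ∑ᶠ j, (∑ᶠ i, r i * E i j) * g j := by
        refine finsum_congr fun j => ?_
        rw [finsum_eq_sum_of_support_subset _ (hsupp _), Finset.sum_mul]
        exact Finset.sum_congr rfl fun i _ => (mul_assoc _ _ _).symm

lemma finite_support_finsum_mul [CommSemiring R] {r : α → R} {E : α → β → R}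
    (hr : r.support.Finite) (hE : ∀ i, (E i).support.Finite) :
    (fun j => ∑ᶠ i, r i * E i j).support.Finite := by
  have hsupp : ∀ j, (fun i => r i * E i j).support ⊆ hr.toFinset := fun j =>
    (support_mul_subset_left _ _).trans hr.coe_toFinset.symm.subset
  simp_rw [finsum_eq_sum_of_support_subset _ (hsupp _)]
  exact HasFiniteSupport.sum (fun i => (hE i).subset (support_mul_subset_right _ _)) _

lemma finsum_nat_eq_add_finsum_one_le {M : Type*} [AddCommMonoid M] {f : ℕ → M}
    (hf : f.support.Finite) : ∑ᶠ m, f m = f 0 + ∑ᶠ (m) (_ : 1 ≤ m), f m := by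
  rw [← finsum_mem_univ, show (Set.univ : Set ℕ) = insert 0 {m | 1 ≤ m} by ext m; simp; omega,
    finsum_mem_insert' _ (by simp) (hf.subset Set.inter_subset_right)]
  rfl

end FiniteSums

lemma frequently_im_ne_zero_nhdsNE (z : ℂ) : ∃ᶠ t in 𝓝[≠] z, t.im ≠ 0 := by
  have hpath : Tendsto (fun s : ℝ => z + s * Complex.I) (𝓝[≠] 0) (𝓝[≠] z) := by
    refine tendsto_nhdsWithin_iff.2 ⟨?_, eventually_nhdsWithin_of_forall fun s hs => ?_⟩
    · exact ((Continuous.tendsto (by fun_prop) 0).mono_left nhdsWithin_le_nhds).trans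
        (by simp)
    · simpa using hs
  have hne : ∀ᶠ s in 𝓝[≠] (0 : ℝ), z.im + s ≠ 0 := by
    rcases eq_or_ne z.im 0 with h | h
    · simpa [h] using eventually_mem_nhdsWithin (a := (0 : ℝ)) (s := {0}ᶜ)
    · filter_upwards [eventually_ne_nhdsWithin (show (0 : ℝ) ≠ -z.im by simpa using h)]
        with s hs
      contrapose! hs
      linarith
  exact hpath.frequently (hne.mono fun s hs => by simpa using hs).frequently

lemma frequently_im_ne_zero_cobounded : ∃ᶠ t in cobounded ℂ, t.im ≠ 0 := by
  have hpath : Tendsto (fun x : ℝ => x * Complex.I) atTop (cobounded ℂ) := by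
    rw [← tendsto_norm_atTop_iff_cobounded]
    simpa using tendsto_abs_atTop_atTop
  refine hpath.frequently ((eventually_gt_atTop 0).mono fun x hx => ?_).frequently
  simpa using hx.ne'

def HasResidue (f : ℂ → ℂ) (z r : ℂ) : Prop :=
  Tendsto (fun t => (t - z) * f t) (𝓝[≠] z) (𝓝 r)

namespace HasResidue

variable {f g : ℂ → ℂ} {z r r' : ℂ}

lemma unique_of_eq_off_real (hf : HasResidue f z r) (hg : HasResidue g z r')
    (hfg : ∀ t, t.im ≠ 0 → f t = g t) : r = r' :=
  tendsto_nhds_unique_of_frequently_eq hf hg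
    ((frequently_im_ne_zero_nhdsNE z).mono fun t ht => by rw [hfg t ht])

lemma const_mul (hf : HasResidue f z r) (c : ℂ) : HasResidue (fun t => c * f t) z (c * r) := by
  simpa only [HasResidue, mul_left_comm] using (Tendsto.const_mul c hf)

lemma add (hf : HasResidue f z r) (hg : HasResidue g z r') :
    HasResidue (fun t => f t + g t) z (r + r') := by
  simpa only [HasResidue, mul_add] using Tendsto.add hf hg

lemma sub (hf : HasResidue f z r) (hg : HasResidue g z r') :
    HasResidue (fun t => f t - g t) z (r - r') := by
  simpa only [HasResidue, mul_sub] using Tendsto.sub hf hg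

lemma finsetSum {ι : Type*} (s : Finset ι) {f : ι → ℂ → ℂ} {r : ι → ℂ}
    (hf : ∀ i ∈ s, HasResidue (f i) z (r i)) :
    HasResidue (fun t => ∑ i ∈ s, f i t) z (∑ i ∈ s, r i) := by
  simpa only [HasResidue, Finset.mul_sum] using tendsto_finsetSum s hf

lemma finsum_mul {ι : Type*} {c : ι → ℂ} (hc : c.support.Finite) {f : ι → ℂ → ℂ} {r : ι → ℂ}
    (hf : ∀ i, HasResidue (f i) z (r i)) :
    HasResidue (fun t => ∑ᶠ i, c i * f i t) z (∑ᶠ i, c i * r i) := by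
  simpa only [HasResidue, mul_finsum, mul_left_comm] using tendsto_finsum_mul hc hf

end HasResidue

lemma hasResidue_of_continuousAt {f : ℂ → ℂ} {z : ℂ} (hf : ContinuousAt f z) :
    HasResidue f z 0 := by
  have : ContinuousAt (fun t => (t - z) * f t) z := by fun_prop
  simpa [HasResidue] using this.tendsto.mono_left nhdsWithin_le_nhds

lemma hasResidue_inv_sub_mul {h : ℂ → ℂ} {z : ℂ} (hh : ContinuousAt h z) (hz : h z ≠ 0) :
    HasResidue (fun t => ((t - z) * h t)⁻¹) z (h z)⁻¹ := by
  refine ((hh.inv₀ hz).tendsto.mono_left nhdsWithin_le_nhds).congr' ?_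
  filter_upwards [self_mem_nhdsWithin] with t ht
  rw [mul_inv, ← mul_assoc, mul_inv_cancel₀ (sub_ne_zero.2 ht), one_mul]
  rfl

lemma adm_of_im_ne_zero {eps : ℝ} {L : ℕ} {t : ℂ} (ht : t.im ≠ 0) : Adm eps L t := by
  intro m h
  rcases (Commute.all t _).sq_eq_sq_iff_eq_or_eq_neg.1 h with h' | h' <;>
    exact ht (by simp [h'])

lemma pochC_ne_zero_of_re_pos {x : ℂ} (hx : 0 < x.re) (n : ℕ) : pochC x n ≠ 0 := by
  rw [pochC, Ne, ascPochhammer_eval_eq_zero_iff]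
  rintro ⟨k, -, hk⟩
  have := congrArg Complex.re hk
  simp only [Complex.natCast_re, Complex.neg_re] at this
  linarith [(k.cast_nonneg : (0 : ℝ) ≤ k)]

lemma pochC_neg_nat_ne_zero {μ n : ℕ} (hn : n ≤ μ) : pochC (-μ) n ≠ 0 := by
  rw [pochC, Ne, ascPochhammer_eval_eq_zero_iff]
  rintro ⟨k, hk, hkμ⟩
  rw [neg_neg, Nat.cast_inj] at hkμ
  omega

/-- The point `A_m`. -/
def pole (eps : ℝ) (L m : ℕ) : ℂ := (L : ℂ) + (eps : ℂ) + (m : ℂ) - 1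

section Poles

variable {eps : ℝ} {L : ℕ}

lemma natCast_add_pos (heps : 0 ≤ eps) (hL : 1 ≤ L) : 0 < (L : ℝ) + eps := by
  have : (1 : ℝ) ≤ L := by exact_mod_cast hL
  linarith

@[simp] lemma pole_re (m : ℕ) : (pole eps L m).re = L + eps + m - 1 := by simp [pole]

lemma pole_inj {m n : ℕ} : pole eps L m = pole eps L n ↔ m = n := by simp [pole]

lemma pole_add_ne_zero (hLε : 0 < (L : ℝ) + eps) {m n : ℕ} (hm : 1 ≤ m) (hn : 1 ≤ n) :
    pole eps L m + pole eps L n ≠ 0 := by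
  intro h
  have := congrArg Complex.re h
  simp only [Complex.add_re, pole_re, Complex.zero_re] at this
  have : (1 : ℝ) ≤ m := by exact_mod_cast hm
  have : (1 : ℝ) ≤ n := by exact_mod_cast hn
  linarith

lemma neg_pole_add_add (m : ℕ) : -pole eps L (m + 1) + L + eps = -(m : ℂ) := by
  simp only [pole]; push_cast; ring

lemma efun_zero : efun eps L 0 = fun _ => 1 := by
  funext t
  simp [efun]

lemma efun_of_ne_zero {m : ℕ} (hm : m ≠ 0) :
    efun eps L m = fun t => (t - pole eps L m)⁻¹ - (t + pole eps L m)⁻¹ := by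
  funext t
  simp [efun, pole, hm]

lemma hasResidue_efun (hLε : 0 < (L : ℝ) + eps) {μ : ℕ} (hμ : 1 ≤ μ) (m : ℕ) :
    HasResidue (efun eps L m) (pole eps L μ) (if m = μ then 1 else 0) := by
  rcases eq_or_ne m 0 with rfl | hm0
  · rw [if_neg (by omega)]
    exact hasResidue_of_continuousAt (by rw [efun_zero]; fun_prop)
  have hcont : ContinuousAt (fun t => (t + pole eps L m)⁻¹) (pole eps L μ) :=
    (continuousAt_id.add continuousAt_const).inv₀ (by
      simpa [add_comm] using pole_add_ne_zero hLε hμ (Nat.one_le_iff_ne_zero.2 hm0))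
  rw [efun_of_ne_zero hm0]
  split_ifs with hmμ
  · subst hmμ
    simpa using (hasResidue_inv_sub_mul (h := fun _ => 1) continuousAt_const one_ne_zero).sub
      (hasResidue_of_continuousAt hcont)
  · refine hasResidue_of_continuousAt (ContinuousAt.sub ?_ hcont)
    exact (continuousAt_id.sub continuousAt_const).inv₀
      (sub_ne_zero.2 (pole_inj.not.2 (Ne.symm hmμ)))

lemma tendsto_efun_cobounded (m : ℕ) :
    Tendsto (efun eps L m) (cobounded ℂ) (𝓝 (if m = 0 then 1 else 0)) := by
  rcases eq_or_ne m 0 with rfl | hm0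
  · rw [efun_zero]
    exact tendsto_const_nhds
  rw [if_neg hm0, efun_of_ne_zero hm0, ← sub_zero 0]
  exact (tendsto_inv₀_cobounded.comp (tendsto_sub_const_cobounded _)).sub
    (tendsto_inv₀_cobounded.comp (tendsto_add_const_cobounded _))

end Poles

section Gfun

variable {a eps : ℝ} {L : ℕ}

/-- The denominator of the `n`-th term of `g_k`; it vanishes exactly at `±A_1, …, ±A_n`. -/
noncomputable def gden (eps : ℝ) (L n : ℕ) (t : ℂ) : ℂ :=
  pochC (-t + L + eps) n * pochC (t + L + eps) n

noncomputable def gcoeff (a eps : ℝ) (L k n : ℕ) : ℂ :=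
  pochC (-(k : ℂ)) n * pochC ((k : ℂ) + 2 * (eps : ℂ)) n * pochC (L : ℂ) n *
    pochC ((L : ℂ) + (a : ℂ)) n / (pochC ((a : ℂ) + 1) n * (n.factorial : ℂ))

lemma gfun_eq_sum (k : ℕ) :
    gfun a eps L k = fun t => ∑ n ∈ range (k + 1), gcoeff a eps L k n * (gden eps L n t)⁻¹ := by
  funext t
  refine Finset.sum_congr rfl fun n _ => ?_
  simp only [gcoeff, gden, div_eq_mul_inv, mul_inv]
  ring

lemma gfun_zero (t : ℂ) : gfun a eps L 0 t = 1 := by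
  simp [gfun, pochC]

lemma continuous_gden (n : ℕ) : Continuous (gden eps L n) := by
  unfold gden pochC
  fun_prop

lemma hasResidue_inv_gden_of_lt (hLε : 0 < (L : ℝ) + eps) {n m : ℕ} (hnm : n < m) :
    HasResidue (fun t => (gden eps L n t)⁻¹) (pole eps L m) 0 := by
  obtain ⟨μ, rfl⟩ : ∃ μ, m = μ + 1 := ⟨m - 1, by omega⟩
  refine hasResidue_of_continuousAt ((continuous_gden n).continuousAt.inv₀ ?_)
  refine mul_ne_zero ?_ (pochC_ne_zero_of_re_pos ?_ n)
  · rw [neg_pole_add_add]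
    exact pochC_neg_nat_ne_zero (by omega)
  · simp only [Complex.add_re, pole_re, Complex.natCast_re, Complex.ofReal_re]
    push_cast
    linarith

lemma exists_hasResidue_inv_gden_self (hLε : 0 < (L : ℝ) + eps) {m : ℕ} (hm : 1 ≤ m) :
    ∃ r ≠ 0, HasResidue (fun t => (gden eps L m t)⁻¹) (pole eps L m) r := by
  obtain ⟨μ, rfl⟩ : ∃ μ, m = μ + 1 := ⟨m - 1, by omega⟩
  set h : ℂ → ℂ := fun t => -(pochC (-t + L + eps) μ * pochC (t + L + eps) (μ + 1))
  have hfactor : ∀ t, gden eps L (μ + 1) t = (t - pole eps L (μ + 1)) * h t := by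
    intro t
    simp only [gden, h, pochC, ascPochhammer_succ_eval, pole]
    push_cast
    ring
  have hh : h (pole eps L (μ + 1)) ≠ 0 := by
    refine neg_ne_zero.2 (mul_ne_zero ?_ (pochC_ne_zero_of_re_pos ?_ _))
    · rw [neg_pole_add_add]
      exact pochC_neg_nat_ne_zero le_rfl
    · simp only [Complex.add_re, pole_re, Complex.natCast_re, Complex.ofReal_re]
      push_cast
      linarith
  refine ⟨_, inv_ne_zero hh, ?_⟩
  simp_rw [hfactor]
  exact hasResidue_inv_sub_mul (by unfold h pochC; fun_prop) hh

lemma gcoeff_self_ne_zero (ha : -1 < a) (heps : 0 ≤ eps) (hL : 1 ≤ L) {k : ℕ} (hk : 1 ≤ k) :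
    gcoeff a eps L k k ≠ 0 := by
  have hk' : (1 : ℝ) ≤ k := by exact_mod_cast hk
  have hL' : (1 : ℝ) ≤ L := by exact_mod_cast hL
  refine div_ne_zero (mul_ne_zero (mul_ne_zero (mul_ne_zero ?_ ?_) ?_) ?_)
    (mul_ne_zero ?_ (by exact_mod_cast k.factorial_ne_zero))
  · exact pochC_neg_nat_ne_zero le_rfl
  all_goals
    refine pochC_ne_zero_of_re_pos ?_ k
    simp only [Complex.add_re, Complex.mul_re, Complex.natCast_re, Complex.ofReal_re,
      Complex.one_re, Complex.re_ofNat, Complex.im_ofNat, Complex.ofReal_im]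
    linarith

lemma hasResidue_gfun_of_lt (hLε : 0 < (L : ℝ) + eps) {k m : ℕ} (hkm : k < m) :
    HasResidue (gfun a eps L k) (pole eps L m) 0 := by
  rw [gfun_eq_sum]
  simpa using HasResidue.finsetSum (range (k + 1)) fun n hn =>
    (hasResidue_inv_gden_of_lt hLε (by simp at hn; omega)).const_mul (gcoeff a eps L k n)

lemma exists_hasResidue_gfun_self (ha : -1 < a) (heps : 0 ≤ eps) (hL : 1 ≤ L) {m : ℕ}
    (hm : 1 ≤ m) : ∃ r ≠ 0, HasResidue (gfun a eps L m) (pole eps L m) r := by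
  have hLε := natCast_add_pos heps hL
  obtain ⟨r, hr0, hr⟩ := exists_hasResidue_inv_gden_self hLε hm
  refine ⟨gcoeff a eps L m m * r, mul_ne_zero (gcoeff_self_ne_zero ha heps hL hm) hr0, ?_⟩
  simp_rw [gfun_eq_sum, Finset.sum_range_succ]
  simpa using (HasResidue.finsetSum (range m) fun n hn =>
    (hasResidue_inv_gden_of_lt hLε (mem_range.1 hn)).const_mul (gcoeff a eps L m n)).add
    (hr.const_mul _)

end Gfun

section Expansion

variable {a eps : ℝ} {L : ℕ}

/-- At the largest `K ≥ m₀` with `d K ≠ 0`, only `g_K` contributes a residue at `A_K`. -/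
theorem coeff_eq_zero_of_hasResidue_eq_zero (ha : -1 < a) (heps : 0 ≤ eps) (hL : 1 ≤ L)
    {d : ℕ → ℂ} (hd : d.support.Finite) {f : ℂ → ℂ}
    (hf : ∀ t, Adm eps L t → f t = ∑ᶠ k, d k * gfun a eps L k t) {m₀ : ℕ} (hm₀ : 1 ≤ m₀)
    (hres : ∀ m, m₀ ≤ m → HasResidue f (pole eps L m) 0) : ∀ k, m₀ ≤ k → d k = 0 := by
  by_contra! hne
  obtain ⟨K, ⟨hK, hdK⟩, hmax⟩ := Set.exists_max_image {k | m₀ ≤ k ∧ d k ≠ 0} id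
    (hd.subset fun k hk => hk.2) hne
  have hLε := natCast_add_pos heps hL
  have htrunc : ∀ t, ∑ᶠ k, d k * gfun a eps L k t =
      ∑ k ∈ range K, d k * gfun a eps L k t + d K * gfun a eps L K t := by
    intro t
    rw [← Finset.sum_range_succ]
    refine finsum_eq_sum_of_support_subset _ fun k hk => ?_
    have hdk : d k ≠ 0 := left_ne_zero_of_mul hk
    have hkK : k ≤ K := by
      by_contra! hKk
      exact not_le.2 hKk (hmax k ⟨by omega, hdk⟩)
    simpa [Nat.lt_succ_iff] using hkK
  obtain ⟨r, hr0, hr⟩ := exists_hasResidue_gfun_self ha heps hL (hm₀.trans hK)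
  have hexp : HasResidue (fun t => ∑ k ∈ range K, d k * gfun a eps L k t + d K * gfun a eps L K t)
      (pole eps L K) (0 + d K * r) := by
    refine HasResidue.add ?_ (hr.const_mul _)
    simpa using HasResidue.finsetSum (range K) fun k hk =>
      (hasResidue_gfun_of_lt (a := a) hLε (mem_range.1 hk)).const_mul (d k)
  have := (hres K hK).unique_of_eq_off_real hexp fun t ht => by
    rw [hf t (adm_of_im_ne_zero ht), htrunc]
  simp [hr0, hdK, eq_comm] at this

theorem expansion_coeff_unique (ha : -1 < a) (heps : 0 ≤ eps) (hL : 1 ≤ L)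
    {d d' : ℕ → ℂ} (hd : d.support.Finite) (hd' : d'.support.Finite)
    (h : ∀ t, Adm eps L t →
      ∑ᶠ k, d k * gfun a eps L k t = ∑ᶠ k, d' k * gfun a eps L k t) : d = d' := by
  have hfin : (d - d').support.Finite := (hd.union hd').subset (support_sub _ _)
  have hzero : ∀ t, Adm eps L t → (0 : ℂ) = ∑ᶠ k, (d - d') k * gfun a eps L k t := by
    intro t ht
    simp_rw [Pi.sub_apply, sub_mul]
    rw [finsum_sub_distrib (hd.subset (support_mul_subset_left _ _))
      (hd'.subset (support_mul_subset_left _ _)), h t ht, sub_self]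
  have hpos := coeff_eq_zero_of_hasResidue_eq_zero ha heps hL hfin hzero le_rfl fun m _ =>
    hasResidue_of_continuousAt continuousAt_const
  have h0 : (d - d') 0 = 0 := by
    have := hzero Complex.I (adm_of_im_ne_zero (by simp))
    rwa [finsum_eq_single _ 0 fun k hk => by rw [hpos k (by omega), zero_mul], gfun_zero,
      mul_one, eq_comm] at this
  funext k
  refine sub_eq_zero.1 ?_
  rcases Nat.eq_zero_or_pos k with rfl | hk
  exacts [h0, hpos k hk]

lemma efun_coeff_eq_zero_of_lt (ha : -1 < a) (heps : 0 ≤ eps) (hL : 1 ≤ L) {m : ℕ}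
    (hm : 1 ≤ m) {E : ℕ → ℂ} (hE : E.support.Finite)
    (h : ∀ t, Adm eps L t → efun eps L m t = ∑ᶠ k, E k * gfun a eps L k t) {k : ℕ}
    (hmk : m < k) : E k = 0 := by
  have hLε := natCast_add_pos heps hL
  refine coeff_eq_zero_of_hasResidue_eq_zero ha heps hL hE h (by omega : 1 ≤ m + 1)
    (fun μ hμ => ?_) k hmk
  simpa [show m ≠ μ by omega] using hasResidue_efun hLε (by omega : 1 ≤ μ) m

end Expansion

section PartialFractions

variable {a eps : ℝ} {L : ℕ} {r : ℕ → ℂ}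

lemma hasResidue_finsum_efun (hLε : 0 < (L : ℝ) + eps) (hr : r.support.Finite) {m : ℕ}
    (hm : 1 ≤ m) : HasResidue (fun t => ∑ᶠ j, r j * efun eps L j t) (pole eps L m) (r m) := by
  have := HasResidue.finsum_mul hr fun j => hasResidue_efun hLε hm j
  rwa [finsum_eq_single _ m fun j hj => by simp [hj], if_pos rfl, mul_one] at this

lemma tendsto_finsum_efun_cobounded (hr : r.support.Finite) :
    Tendsto (fun t => ∑ᶠ j, r j * efun eps L j t) (cobounded ℂ) (𝓝 (r 0)) := by
  have := tendsto_finsum_mul hr fun j => tendsto_efun_cobounded (eps := eps) (L := L) j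
  rwa [finsum_eq_single _ 0 fun j hj => by simp [hj], if_pos rfl, mul_one] at this

/-- `e_0 = g_0` is expanded with the coefficients `Pi.single 0 1`. -/
lemma coeff_eq_finsum_of_partialFractions (ha : -1 < a) (heps : 0 ≤ eps) (hL : 1 ≤ L)
    {φ : ℂ → ℂ} (hr : r.support.Finite)
    (hφ : ∀ t, Adm eps L t → φ t = ∑ᶠ m, r m * efun eps L m t)
    {c : ℕ → ℂ} (hcfin : c.support.Finite)
    (hc : ∀ t, Adm eps L t → φ t = ∑ᶠ k, c k * gfun a eps L k t)
    {E : ℕ → ℕ → ℂ} (hEfin : ∀ m, (E m).support.Finite)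
    (hE : ∀ m, 1 ≤ m → ∀ t, Adm eps L t → efun eps L m t = ∑ᶠ k, E m k * gfun a eps L k t) :
    ∀ k, c k = ∑ᶠ m, r m * update E 0 (Pi.single 0 1) m k := by
  have hE'fin : ∀ m, (update E 0 (Pi.single 0 1) m).support.Finite := by
    intro m
    rcases eq_or_ne m 0 with rfl | hm
    · simp
    · simpa [hm] using hEfin m
  have hE' : ∀ m t, Adm eps L t →
      efun eps L m t = ∑ᶠ k, update E 0 (Pi.single 0 1) m k * gfun a eps L k t := by
    intro m t ht
    rcases eq_or_ne m 0 with rfl | hm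
    · rw [efun_zero, update_self, finsum_eq_single _ 0 fun k hk => by simp [hk], gfun_zero]
      simp
    · rw [update_of_ne hm, hE m (by omega) t ht]
  refine congrFun (expansion_coeff_unique ha heps hL hcfin (finite_support_finsum_mul hr hE'fin)
    fun t ht => ?_)
  rw [← hc t ht, hφ t ht, ← finsum_mul_finsum_mul_comm hr hE'fin]
  exact finsum_congr fun m => by rw [hE' m t ht]

end PartialFractions

/-- **Expansion coefficients via residues** (Proposition 5.1 of the paper): if
`φ ∈ F(ε,L)` has expansion `φ = Σ_k c_k g_k`, and `e_m = Σ_k E(m,k) g_k` for `m ≥ 1`,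
and `R m = Res_{t=A_m} φ(t) = lim_{t→A_m}(t−A_m)φ(t)`, `φ∞ = lim_{t→∞} φ(t)`, then
`c_k = Σ_{m≥k} R m · E(m,k)` for `k ≥ 1` and `c_0 = φ∞ + Σ_{m≥1} R m · E(m,0)`;
in each sum only finitely many terms are nonzero. -/
theorem coefficients_via_residues
    (a eps : ℝ) (ha : -1 < a) (heps : 0 ≤ eps) (L : ℕ) (hL : 2 ≤ L)
    (φ : ℂ → ℂ) (hφ : InF eps L φ)
    (c : ℕ → ℂ) (hcfin : (Function.support c).Finite)
    (hc : ∀ t : ℂ, Adm eps L t → φ t = ∑ᶠ k : ℕ, c k * gfun a eps L k t)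
    (E : ℕ → ℕ → ℂ) (hEfin : ∀ m, (Function.support (E m)).Finite)
    (hE : ∀ m : ℕ, 1 ≤ m → ∀ t : ℂ, Adm eps L t →
      efun eps L m t = ∑ᶠ k : ℕ, E m k * gfun a eps L k t)
    (R : ℕ → ℂ)
    (hR : ∀ m : ℕ, 1 ≤ m →
      Filter.Tendsto (fun t : ℂ => (t - ((L:ℂ) + (eps:ℂ) + (m:ℂ) - 1)) * φ t)
        (nhdsWithin ((L:ℂ) + (eps:ℂ) + (m:ℂ) - 1) {((L:ℂ) + (eps:ℂ) + (m:ℂ) - 1)}ᶜ)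
        (nhds (R m)))
    (φinf : ℂ)
    (hφinf : Filter.Tendsto φ (Bornology.cobounded ℂ) (nhds φinf)) :
    {m : ℕ | 1 ≤ m ∧ R m ≠ 0}.Finite ∧
    (∀ k : ℕ, 1 ≤ k → c k = ∑ᶠ (m : ℕ) (_ : k ≤ m), R m * E m k) ∧
    c 0 = φinf + ∑ᶠ (m : ℕ) (_ : 1 ≤ m), R m * E m 0 := by
  obtain ⟨r, hr, hφr⟩ := hφ
  have hL1 : 1 ≤ L := by omega
  have hLε := natCast_add_pos heps hL1
  have hRr : ∀ m, 1 ≤ m → R m = r m := fun m hm =>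
    HasResidue.unique_of_eq_off_real (f := φ) (z := pole eps L m) (hR m hm)
      (hasResidue_finsum_efun hLε hr hm) fun t ht => hφr t (adm_of_im_ne_zero ht)
  have hφinf_eq : φinf = r 0 := tendsto_nhds_unique_of_frequently_eq hφinf
    (tendsto_finsum_efun_cobounded hr)
    (frequently_im_ne_zero_cobounded.mono fun t ht => hφr t (adm_of_im_ne_zero ht))
  have hcoeff := coeff_eq_finsum_of_partialFractions ha heps hL1 hr hφr hcfin hc hEfin hE
  refine ⟨hr.subset fun m hm => by rw [mem_support, ← hRr m hm.1]; exact hm.2,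
    fun k hk => ?_, ?_⟩
  · rw [hcoeff k]
    refine finsum_congr fun m => ?_
    rw [finsum_eq_if]
    split_ifs with hkm
    · rw [update_of_ne (by omega), hRr m (by omega)]
    · rcases eq_or_ne m 0 with rfl | hm
      · simp [show k ≠ 0 by omega]
      · rw [update_of_ne hm, efun_coeff_eq_zero_of_lt ha heps hL1 (by omega) (hEfin m)
          (hE m (by omega)) (by omega : m < k), mul_zero]
  · rw [hcoeff 0, finsum_nat_eq_add_finsum_one_le (hr.subset fun m hm => left_ne_zero_of_mul hm),
      update_self, Pi.single_eq_same, mul_one, hφinf_eq]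
    exact congrArg _ (finsum_congr fun m => finsum_congr fun hm => by
      rw [update_of_ne (by omega), hRr m hm])
end

section
/- Let ε ≥ 0 be real, L ≥ 2 an integer, and m ≥ 1 an integer. Then for every complex t with t² ≠ (L+ε+j−1)² for j = 1,…,m: e_m(t) = Σ_{ℓ=1}^{m} 2·(−1)^{ℓ}·(L+ε+m−1)·[∏_{j=1}^{ℓ−1} (2L+2ε+m+j−2)(m−j)]·f_ℓ(t). In particular, in the (unique) expansion of e_m in the functions f_0 ≡ 1, f_1, f_2, …, the coefficient of f_0 is zero and the coefficient of f_ℓ (1 ≤ ℓ ≤ m) equals 2(−1)^{ℓ}(L+ε+m−1)·∏_{j=1}^{ℓ−1}(2L+2ε+m+j−2)(m−j). -/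
/-!
Write `A = L+ε+m−1` and `B_k = L+ε+k`. Then `e_m(t) = 2A/(t²−A²)`,
`(−1)^ℓ f_ℓ(t) = 1/∏_{k<ℓ}(t²−B_k²)`, and the `ℓ`-th coefficient is `2A ∏_{k<ℓ−1}(A²−B_k²)`.
So the identity is `2A` times the Newton-type expansion
`1/(x−a) = Σ_{i<n} ∏_{k<i}(a−b_k) / ∏_{k≤i}(x−b_k) + ∏_{k<n}(a−b_k) / ((x−a) ∏_{k<n}(x−b_k))`
at `x = t²`, `a = A²`, `b_k = B_k²`, `n = m`, whose remainder vanishes because `A = B_{m−1}`.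
-/

open Finset

/-- `f_ℓ(t) = 1/((−t+L+ε)_ℓ (t+L+ε)_ℓ)`. -/
noncomputable def ffun (eps : ℝ) (L : ℕ) (l : ℕ) (t : ℂ) : ℂ :=
  1 / (pochC (-t + (L:ℂ) + (eps:ℂ)) l * pochC (t + (L:ℂ) + (eps:ℂ)) l)

@[to_additive]
theorem prod_Icc_eq_prod_range_succ {M : Type*} [CommMonoid M] (f : ℕ → M) (n : ℕ) :
    ∏ j ∈ Icc 1 n, f j = ∏ k ∈ range n, f (k + 1) := by
  induction n with
  | zero => simp
  | succ n ih => rw [prod_Icc_succ_top (by omega), ih, prod_range_succ]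

section Expansion

variable {K : Type*} [Field K] (x a : K) (b : ℕ → K)

theorem inv_sub_eq_sum_add (hxa : x ≠ a) {n : ℕ} (hxb : ∀ k < n, x ≠ b k) :
    (x - a)⁻¹ = ∑ i ∈ range n, (∏ k ∈ range i, (a - b k)) / ∏ k ∈ range (i + 1), (x - b k)
      + (∏ k ∈ range n, (a - b k)) / ((x - a) * ∏ k ∈ range n, (x - b k)) := by
  induction n with
  | zero => simp
  | succ n ih =>
    have hxbn : x - b n ≠ 0 := sub_ne_zero.mpr (hxb n n.lt_succ_self)
    have hQ : ∏ k ∈ range n, (x - b k) ≠ 0 :=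
      prod_ne_zero_iff.mpr fun k hk => sub_ne_zero.mpr (hxb k (by simp at hk; omega))
    rw [ih fun k hk => hxb k (by omega), sum_range_succ, add_assoc]
    congr 1
    simp only [prod_range_succ]
    field_simp [sub_ne_zero.mpr hxa]
    ring

theorem inv_sub_eq_sum_of_eq (hxa : x ≠ a) {n j : ℕ} (hxb : ∀ k < n, x ≠ b k) (hj : j < n)
    (hba : b j = a) :
    (x - a)⁻¹ = ∑ i ∈ range n, (∏ k ∈ range i, (a - b k)) / ∏ k ∈ range (i + 1), (x - b k) := by
  have hP : ∏ k ∈ range n, (a - b k) = 0 :=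
    prod_eq_zero (mem_range.mpr hj) (by rw [hba, sub_self])
  rw [inv_sub_eq_sum_add x a b hxa hxb, hP, zero_div, add_zero]

end Expansion

theorem pochC_eq_prod (x : ℂ) (n : ℕ) : pochC x n = ∏ k ∈ range n, (x + k) := by
  induction n with
  | zero => simp [pochC]
  | succ n ih => rw [pochC, ascPochhammer_succ_eval, ← pochC, ih, prod_range_succ]

theorem neg_one_pow_mul_ffun (eps : ℝ) (L l : ℕ) (t : ℂ) :
    (-1) ^ l * ffun eps L l t = (∏ k ∈ range l, (t ^ 2 - ((L : ℂ) + eps + k) ^ 2))⁻¹ := by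
  have h : ∏ k ∈ range l, (t ^ 2 - ((L : ℂ) + eps + k) ^ 2)
      = (-1) ^ l * ∏ k ∈ range l, ((-t + L + eps + k) * (t + L + eps + k)) := by
    rw [pow_eq_prod_const (-1 : ℂ), ← prod_mul_distrib]
    exact prod_congr rfl fun k _ => by ring
  rw [ffun, pochC_eq_prod, pochC_eq_prod, ← prod_mul_distrib, one_div, h, mul_inv, ← inv_pow,
    inv_neg_one]

theorem efun_eq_mul_inv (eps : ℝ) (L m : ℕ) (t : ℂ) (hm : m ≠ 0)
    (ht : t ^ 2 ≠ ((L : ℂ) + eps + m - 1) ^ 2) :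
    efun eps L m t = 2 * ((L : ℂ) + eps + m - 1) * (t ^ 2 - ((L : ℂ) + eps + m - 1) ^ 2)⁻¹ := by
  rw [efun, if_neg hm]
  set A : ℂ := (L : ℂ) + eps + m - 1
  have hsq : t ^ 2 - A ^ 2 = (t - A) * (t + A) := by ring
  have hA : (t - A) * (t + A) ≠ 0 := hsq ▸ sub_ne_zero.mpr ht
  rw [hsq]
  field_simp [left_ne_zero_of_mul hA, right_ne_zero_of_mul hA]
  ring

theorem efun_expansion_ffun_general (eps : ℝ) (L m : ℕ) (hm : 1 ≤ m)
    (t : ℂ) (ht : ∀ j : ℕ, 1 ≤ j → j ≤ m → t^2 ≠ ((L:ℂ) + (eps:ℂ) + (j:ℂ) - 1)^2) :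
    efun eps L m t
      = ∑ l ∈ Finset.Icc 1 m,
          2 * (-1)^l * ((L:ℂ) + (eps:ℂ) + (m:ℂ) - 1) *
            (∏ j ∈ Finset.Icc 1 (l - 1),
              ((2*(L:ℂ) + 2*(eps:ℂ) + (m:ℂ) + (j:ℂ) - 2) * ((m:ℂ) - (j:ℂ)))) *
            ffun eps L l t := by
  set A : ℂ := (L : ℂ) + eps + m - 1
  set B : ℕ → ℂ := fun k => (L : ℂ) + eps + k
  have hB : ∀ k < m, t ^ 2 ≠ B k ^ 2 := fun k hk => by
    simpa [B, add_sub_assoc] using ht (k + 1) (by omega) (by omega)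
  have hBA : B (m - 1) = A := by simp [B, A, Nat.cast_sub hm, add_sub_assoc]
  rw [efun_eq_mul_inv eps L m t (by omega) (ht m hm le_rfl),
    inv_sub_eq_sum_of_eq (t ^ 2) (A ^ 2) (fun k => B k ^ 2) (ht m hm le_rfl) hB
      (Nat.sub_lt hm one_pos) (by rw [hBA]), mul_sum, sum_Icc_eq_sum_range_succ]
  refine sum_congr rfl fun i _ => ?_
  have hcoef : ∏ k ∈ range i, (A ^ 2 - B k ^ 2) = ∏ k ∈ range i,
      ((2 * (L : ℂ) + 2 * eps + m + ((k + 1 : ℕ) : ℂ) - 2) * (m - ((k + 1 : ℕ) : ℂ))) :=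
    prod_congr rfl fun k _ => by simp only [A, B]; push_cast; ring
  rw [Nat.add_sub_cancel, prod_Icc_eq_prod_range_succ, ← hcoef, div_eq_mul_inv,
    ← neg_one_pow_mul_ffun]
  ring

/-- **Expansion of `e_m` in the functions `f_ℓ`** (Lemma 5.3 of the paper):
`e_m(t) = Σ_{ℓ=1}^{m} 2(−1)^ℓ (L+ε+m−1) [∏_{j=1}^{ℓ−1} (2L+2ε+m+j−2)(m−j)] f_ℓ(t)`;
in particular the coefficient of `f₀` vanishes. -/
theorem efun_expansion_ffun (eps : ℝ) (heps : 0 ≤ eps) (L m : ℕ) (hL : 2 ≤ L) (hm : 1 ≤ m)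
    (t : ℂ) (ht : ∀ j : ℕ, 1 ≤ j → j ≤ m → t^2 ≠ ((L:ℂ) + (eps:ℂ) + (j:ℂ) - 1)^2) :
    efun eps L m t
      = ∑ l ∈ Finset.Icc 1 m,
          2 * (-1)^l * ((L:ℂ) + (eps:ℂ) + (m:ℂ) - 1) *
            (∏ j ∈ Finset.Icc 1 (l - 1),
              ((2*(L:ℂ) + 2*(eps:ℂ) + (m:ℂ) + (j:ℂ) - 2) * ((m:ℂ) - (j:ℂ)))) *
            ffun eps L l t :=
  efun_expansion_ffun_general eps L m hm t ht
end
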